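/- Let 3/2 < p < 2 and 1/q = 2/p − 1/3. For all t ≥ 0, η(t) ≤ ∏_{i=1}^N exp(3|b_i(t)|(|h_i|_{L¹} + |λ_i|) − t·α_i), where α_i := λ_i²/2 − (3/2)(|h_i|_{L¹}² + 2|λ_i| |h_i|_{L¹}). Moreover, if |λ_i| > (√12 + 3)|h_i|_{L¹} for all i, then α_i > 0 for all i. -/

import Mathlib

open MeasureTheory Real Filter ENNReal

noncomputable section

namespace RandomVorticity

/-- The underlying space `ℝ³`. -/
abbrev E : Type := EuclideanSpace ℝ (Fin 3)

/-- The cross product on `ℝ³`. -/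
def cross3 (a b : E) : E :=
  WithLp.toLp 2 ![a 1 * b 2 - a 2 * b 1, a 2 * b 0 - a 0 * b 2, a 0 * b 1 - a 1 * b 0]

/-- Componentwise convolution of a scalar kernel with a vector field. -/
def conv (h : E → ℝ) (u : E → E) : E → E := fun ξ => ∫ ξ', h (ξ - ξ') • u ξ'

/-- Iterated convolution operator `Bⁿ`, `B u = h * u`. -/
def convIter (h : E → ℝ) : ℕ → (E → E) → E → E
  | 0, u => u
  | n + 1, u => conv h (convIter h n u)

/-- The quadratic polynomial `q(X) = (βλ − τλ²/2) + (β − τλ)X − (τ/2)X²`, so that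
`β B̃ − (τ/2) B̃² = q(B)` where `B̃ = B + λI`. -/
def gammaPoly (β τ lam : ℝ) : Polynomial ℝ :=
  Polynomial.C (β * lam - τ * lam ^ 2 / 2) + Polynomial.C (β - τ * lam) * Polynomial.X -
    Polynomial.C (τ / 2) * Polynomial.X ^ 2

/-- Coefficient of `Xⁿ` in the entire series `exp (q(X))`. -/
def expCoeff (q : Polynomial ℝ) (n : ℕ) : ℝ := ∑' m : ℕ, (q ^ m).coeff n / (Nat.factorial m)

/-- The operator `exp (q(B))`, where `B` is convolution with `h`. -/
def expConvOp (h : E → ℝ) (q : Polynomial ℝ) (u : E → E) : E → E :=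
  fun ξ => ∑' n : ℕ, expCoeff q n • convIter h n u ξ

/-- `Γ(t) = ∏ᵢ exp (bᵢ(t) B̃ᵢ − (t/2) B̃ᵢ²)`, `B̃ᵢ = Bᵢ + λᵢ I`, `Bᵢ u = hᵢ * u`. -/
def GammaOp {N : ℕ} (h : Fin N → E → ℝ) (lam : Fin N → ℝ) (b : Fin N → ℝ → ℝ) (t : ℝ)
    (u : E → E) : E → E :=
  ((List.finRange N).map fun i => expConvOp (h i) (gammaPoly (b i t) t (lam i))).foldr
    (fun f v => f v) u

/-- `Γ(t)⁻¹ = ∏ᵢ exp (−bᵢ(t) B̃ᵢ + (t/2) B̃ᵢ²)`. -/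
def GammaInvOp {N : ℕ} (h : Fin N → E → ℝ) (lam : Fin N → ℝ) (b : Fin N → ℝ → ℝ) (t : ℝ)
    (u : E → E) : E → E :=
  ((List.finRange N).map fun i => expConvOp (h i) (-gammaPoly (b i t) t (lam i))).foldr
    (fun f v => f v) u

/-- Standard basis vector of `ℝ³`. -/
def stdb (j : Fin 3) : E := EuclideanSpace.single j (1 : ℝ)

/-- `v` is the `j`-th weak (distributional) partial derivative of `u`. -/
def HasWeakDeriv (j : Fin 3) (u v : E → E) : Prop :=
  LocallyIntegrable u volume ∧ LocallyIntegrable v volume ∧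
    ∀ φ : E → ℝ, ContDiff ℝ (⊤ : ℕ∞) φ → HasCompactSupport φ →
      ∫ ξ, fderiv ℝ φ ξ (stdb j) • u ξ = -∫ ξ, φ ξ • v ξ

open Classical in
/-- The `j`-th weak partial derivative `D_j u` (an arbitrary representative; `0` if none). -/
def wD (j : Fin 3) (u : E → E) : E → E :=
  if h : ∃ v, HasWeakDeriv j u v then h.choose else 0

/-- The heat semigroup `e^{tΔ}` (convolution with the heat kernel; identity for `t ≤ 0`). -/
def heat (t : ℝ) (u : E → E) : E → E :=
  if t ≤ 0 then u
  else fun ξ => ((4 * π * t) ^ (-(3 : ℝ) / 2)) • ∫ ξ', Real.exp (-‖ξ - ξ'‖ ^ 2 / (4 * t)) • u ξ'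

/-- The Biot–Savart operator `K`. -/
def biotSavart (u : E → E) : E → E :=
  fun ξ => (-(4 * π)⁻¹) • ∫ ξ', cross3 ((‖ξ - ξ'‖ ^ 3)⁻¹ • (ξ - ξ')) (u ξ')

/-- `(v·∇)w`. -/
def advect (v w : E → E) : E → E := fun ξ => ∑ i : Fin 3, v ξ i • wD i w ξ

/-- `M(u) = −[(K(u)·∇)u − (u·∇)K(u)]`. -/
def Mop (u : E → E) : E → E :=
  fun ξ => advect u (biotSavart u) ξ - advect (biotSavart u) u ξ

/-- Operator norm of a map on `L^r`. -/
def opNorm (r : ℝ≥0∞) (T : (E → E) → E → E) : ℝ≥0∞ :=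
  ⨆ u : {u : E → E // MemLp u r volume ∧ eLpNorm u r volume ≤ 1}, eLpNorm (T u.1) r volume

/-- `η(t) = ‖Γ(t)‖_{L(L^p,L^p)} ‖Γ(t)‖_{L(L^{3p/(3−p)},L^{3p/(3−p)})} ‖Γ(t)⁻¹‖_{L(L^q,L^q)}`. -/
def eta {N : ℕ} (h : Fin N → E → ℝ) (lam : Fin N → ℝ) (b : Fin N → ℝ → ℝ) (p q : ℝ)
    (t : ℝ) : ℝ≥0∞ :=
  opNorm (ENNReal.ofReal p) (GammaOp h lam b t) *
    opNorm (ENNReal.ofReal (3 * p / (3 - p))) (GammaOp h lam b t) *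
    opNorm (ENNReal.ofReal q) (GammaInvOp h lam b t)

/-- `sup_{t ≥ 0} η(t)`. -/
def etaSup {N : ℕ} (h : Fin N → E → ℝ) (lam : Fin N → ℝ) (b : Fin N → ℝ → ℝ)
    (p q : ℝ) : ℝ≥0∞ :=
  ⨆ t : {t : ℝ // 0 ≤ t}, eta h lam b p q t.1

/-- The norm `‖·‖_{p,∞}` of the Kato space `Z_p`. -/
def Znorm (p : ℝ) (y : ℝ → E → E) : ℝ≥0∞ :=
  ⨆ (t : {t : ℝ // 0 < t}) (j : Fin 3),
    (ENNReal.ofReal ((t : ℝ) ^ (1 - 3 / (2 * p))) * eLpNorm (y t.1) (ENNReal.ofReal p) volume +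
      ENNReal.ofReal ((t : ℝ) ^ (3 / 2 * (1 - 1 / p))) *
        eLpNorm (wD j (y t.1)) (ENNReal.ofReal p) volume)

/-- Continuity from `[0,∞)` into `L^r`. -/
def ContL (r : ℝ≥0∞) (w : ℝ → E → E) : Prop :=
  ∀ t₀ : ℝ, 0 ≤ t₀ →
    Tendsto (fun t => eLpNorm (w t - w t₀) r volume) (nhdsWithin t₀ (Set.Ici 0)) (nhds 0)

/-- Membership in the Kato space `Z_p`. -/
def MemZ (p : ℝ) (y : ℝ → E → E) : Prop :=
  (∀ t, 0 < t → MemLp (y t) (ENNReal.ofReal p) volume) ∧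
  (∀ t, 0 < t → ∀ j, MemLp (wD j (y t)) (ENNReal.ofReal p) volume) ∧
  Znorm p y < ⊤ ∧
  ContL (ENNReal.ofReal p) (fun t => (t ^ (1 - 3 / (2 * p)) : ℝ) • y t) ∧
  ∀ j, ContL (ENNReal.ofReal p) (fun t => (t ^ (3 / 2 * (1 - 1 / p)) : ℝ) • wD j (y t))

/-- The integral operator `F(z)(t) = ∫₀ᵗ e^{(t−s)Δ} Γ(s)⁻¹ M(Γ(s) z(s)) ds`. -/
def Fop {N : ℕ} (h : Fin N → E → ℝ) (lam : Fin N → ℝ) (b : Fin N → ℝ → ℝ)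
    (z : ℝ → E → E) (t : ℝ) : E → E :=
  fun ξ =>
    ∫ s in Set.Ioc 0 t, heat (t - s) (GammaInvOp h lam b s (Mop (GammaOp h lam b s (z s)))) ξ

/-- `y` is a mild solution: `y(t) = e^{tΔ}U₀ + ∫₀ᵗ e^{(t−s)Δ} Γ(s)⁻¹ M(Γ(s) y(s)) ds`. -/
def IsMildSolution {N : ℕ} (h : Fin N → E → ℝ) (lam : Fin N → ℝ) (b : Fin N → ℝ → ℝ)
    (U₀ : E → E) (y : ℝ → E → E) : Prop :=
  ∀ t, 0 ≤ t → y t =ᵐ[volume] fun ξ => heat t U₀ ξ + Fop h lam b y t ξ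

/-- The `L¹`-norm of a scalar kernel. -/
def l1norm (h : E → ℝ) : ℝ := ∫ ξ, |h ξ|

/-- The standing assumptions on the data: `hᵢ ∈ L¹`, `bᵢ` continuous on `[0,∞)`, `bᵢ(0) = 0`. -/
def KernelData {N : ℕ} (h : Fin N → E → ℝ) (b : Fin N → ℝ → ℝ) : Prop :=
  (∀ i, Integrable (h i) volume) ∧ (∀ i, ContinuousOn (b i) (Set.Ici 0)) ∧ ∀ i, b i 0 = 0

end RandomVorticity

/-!
Each factor of `Γ(t)^{±1}` is `exp (q(B))` with `q = ±gammaPoly`, i.e. the series `∑ₙ cₙ Bⁿ`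
where `cₙ` are the Taylor coefficients of `exp ∘ q`. Young's inequality gives
`‖B‖ ≤ |h|₁` on every `L^r`, `1 ≤ r < ∞`, so `‖exp (q(B))‖ ≤ ∑ₙ |cₙ| |h|₁ⁿ`. Writing
`q = c₀ + q₁`, the factor `e^{c₀}` comes out exactly, and the rest is bounded by
`exp (Q₁ |h|₁)`, where `Q₁` has the absolute values of the coefficients of `q₁`. The constant
term is `bλ − tλ²/2` for `Γ` and its negative for `Γ⁻¹`, so in `η` the constants add up to
`bλ − tλ²/2`, while each of the three factors contributes at most
`|b − tλ| |h|₁ + (t/2) |h|₁²`; then `|b − tλ| ≤ |b| + t|λ|` gives the bound.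
-/

namespace MeasureTheory

section Young

variable {G : Type*} [MeasurableSpace G] [AddCommGroup G] [MeasurableAdd₂ G] [MeasurableNeg G]
  {μ : Measure G} [SFinite μ] [μ.IsAddLeftInvariant] [μ.IsNegInvariant]

theorem lconvolution_rpow_le {p : ℝ} (hp : 1 ≤ p) {f g : G → ℝ≥0∞} (hf : AEMeasurable f μ)
    (hg : AEMeasurable g μ) (x : G) :
    (f ⋆ₗ[μ] g) x ^ p ≤ (∫⁻ y, f y ^ p * g (-y + x) ∂μ) * (∫⁻ y, g y ∂μ) ^ (p - 1) := by
  have hp0 : 0 < p := zero_lt_one.trans_le hp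
  have hp' : 0 ≤ 1 - p⁻¹ := sub_nonneg.2 (inv_le_one_of_one_le₀ hp)
  have hsplit : ∀ y, (f y ^ p * g (-y + x)) ^ p⁻¹ * g (-y + x) ^ (1 - p⁻¹) =
      f y * g (-y + x) := fun y => by
    rw [ENNReal.mul_rpow_of_nonneg _ _ (inv_nonneg.2 hp0.le), ENNReal.rpow_rpow_inv hp0.ne',
      mul_assoc, ← ENNReal.rpow_add_of_nonneg _ _ (inv_nonneg.2 hp0.le) hp', add_sub_cancel,
      ENNReal.rpow_one]
  have hgx : ∫⁻ y, g (-y + x) ∂μ = ∫⁻ y, g y ∂μ := by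
    simp_rw [neg_add_eq_sub]; exact lintegral_sub_left_eq_self g x
  -- Hölder's inequality with exponents `1/p` and `1 - 1/p` against the weight `g (x - ·)`
  have holder := ENNReal.lintegral_mul_norm_pow_le (f := fun y => f y ^ p * g (-y + x))
    (g := fun y => g (-y + x)) (by fun_prop) (by fun_prop) (inv_nonneg.2 hp0.le) hp'
    (add_sub_cancel _ _)
  simp only [hsplit, hgx] at holder
  calc (f ⋆ₗ[μ] g) x ^ p
      ≤ ((∫⁻ y, f y ^ p * g (-y + x) ∂μ) ^ p⁻¹ * (∫⁻ y, g y ∂μ) ^ (1 - p⁻¹)) ^ p :=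
        ENNReal.rpow_le_rpow holder hp0.le
    _ = (∫⁻ y, f y ^ p * g (-y + x) ∂μ) * (∫⁻ y, g y ∂μ) ^ (p - 1) := by
        rw [ENNReal.mul_rpow_of_nonneg _ _ hp0.le, ENNReal.rpow_inv_rpow hp0.ne',
          ← ENNReal.rpow_mul, sub_mul, one_mul, inv_mul_cancel₀ hp0.ne']

theorem lintegral_lconvolution_rpow_le {p : ℝ} (hp : 1 ≤ p) {f g : G → ℝ≥0∞}
    (hf : AEMeasurable f μ) (hg : AEMeasurable g μ) :
    ∫⁻ x, (f ⋆ₗ[μ] g) x ^ p ∂μ ≤ (∫⁻ x, f x ^ p ∂μ) * (∫⁻ x, g x ∂μ) ^ p := by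
  have hfg : ∫⁻ x, ∫⁻ y, f y ^ p * g (-y + x) ∂μ ∂μ = (∫⁻ x, f x ^ p ∂μ) * ∫⁻ x, g x ∂μ := by
    rw [lintegral_lintegral_swap (by fun_prop), ← lintegral_mul_const'' _ (by fun_prop)]
    refine lintegral_congr fun y => ?_
    rw [lintegral_const_mul'' _ (by fun_prop), lintegral_add_left_eq_self g (-y)]
  calc ∫⁻ x, (f ⋆ₗ[μ] g) x ^ p ∂μ
      ≤ ∫⁻ x, (∫⁻ y, f y ^ p * g (-y + x) ∂μ) * (∫⁻ y, g y ∂μ) ^ (p - 1) ∂μ :=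
        lintegral_mono fun x => lconvolution_rpow_le hp hf hg x
    _ = (∫⁻ x, f x ^ p ∂μ) * (∫⁻ x, g x ∂μ) ^ p := by
        rw [lintegral_mul_const'' _ (by fun_prop), hfg, mul_assoc]
        congr 1
        conv_rhs => rw [← add_sub_cancel 1 p,
          ENNReal.rpow_add_of_nonneg _ _ zero_le_one (sub_nonneg.2 hp), ENNReal.rpow_one]

theorem eLpNorm_lconvolution_le {p : ℝ≥0∞} (hp1 : 1 ≤ p) (hp : p ≠ ∞) {f g : G → ℝ≥0∞}
    (hf : AEMeasurable f μ) (hg : AEMeasurable g μ) :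
    eLpNorm (f ⋆ₗ[μ] g) p μ ≤ eLpNorm f p μ * ∫⁻ x, g x ∂μ := by
  have hp0 : p ≠ 0 := (zero_lt_one.trans_le hp1).ne'
  have hp1' : 1 ≤ p.toReal := by simpa using ENNReal.toReal_mono hp hp1
  have hpos : 0 < p.toReal := zero_lt_one.trans_le hp1'
  simp only [eLpNorm_eq_lintegral_rpow_enorm_toReal hp0 hp, enorm_eq_self]
  calc (∫⁻ x, (f ⋆ₗ[μ] g) x ^ p.toReal ∂μ) ^ (1 / p.toReal)
      ≤ ((∫⁻ x, f x ^ p.toReal ∂μ) * (∫⁻ x, g x ∂μ) ^ p.toReal) ^ (1 / p.toReal) :=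
        ENNReal.rpow_le_rpow (lintegral_lconvolution_rpow_le hp1' hf hg) (by positivity)
    _ = (∫⁻ x, f x ^ p.toReal ∂μ) ^ (1 / p.toReal) * ∫⁻ x, g x ∂μ := by
        rw [ENNReal.mul_rpow_of_nonneg _ _ (by positivity), ← ENNReal.rpow_mul,
          mul_one_div_cancel hpos.ne', ENNReal.rpow_one]

end Young

theorem memLp_tsum_and_eLpNorm_tsum_le {α F : Type*} [MeasurableSpace α] {μ : Measure α}
    [NormedAddCommGroup F] [CompleteSpace F] {p : ℝ≥0∞} (hp : 1 ≤ p) {f : ℕ → α → F}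
    (hf : ∀ n, MemLp (f n) p μ) (hsum : ∑' n, eLpNorm (f n) p μ ≠ ∞) :
    MemLp (fun x => ∑' n, f n x) p μ ∧
      eLpNorm (fun x => ∑' n, f n x) p μ ≤ ∑' n, eLpNorm (f n) p μ := by
  have : Fact (1 ≤ p) := ⟨hp⟩
  have hnorm : ∀ n, ‖(hf n).toLp (f n)‖ₑ = eLpNorm (f n) p μ := fun n => Lp.enorm_toLp (hf n)
  have hae := Lp.coeFn_tsum (f := fun n => (hf n).toLp (f n)) (by simpa only [hnorm] using hsum)
  have hae' : (fun x => ∑' n, f n x) =ᵐ[μ] ⇑(∑' n, (hf n).toLp (f n)) := by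
    refine Filter.EventuallyEq.trans ?_ hae.symm
    filter_upwards [ae_all_iff.2 fun n => (hf n).coeFn_toLp] with x hx
    exact tsum_congr fun n => (hx n).symm
  refine ⟨(Lp.memLp _).ae_eq hae'.symm, ?_⟩
  rw [eLpNorm_congr_ae hae', ← Lp.enorm_def]
  exact enorm_tsum_le_tsum_enorm.trans_eq (tsum_congr hnorm)

end MeasureTheory

namespace Polynomial

theorem abs_coeff_mul_le {f F g G : ℝ[X]} (hf : ∀ n, |f.coeff n| ≤ F.coeff n)
    (hg : ∀ n, |g.coeff n| ≤ G.coeff n) (n : ℕ) : |(f * g).coeff n| ≤ (F * G).coeff n := by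
  rw [coeff_mul, coeff_mul]
  refine (Finset.abs_sum_le_sum_abs _ _).trans (Finset.sum_le_sum fun x _ => ?_)
  rw [abs_mul]
  exact mul_le_mul (hf _) (hg _) (abs_nonneg _) ((abs_nonneg _).trans (hf _))

theorem abs_coeff_pow_le {r R : ℝ[X]} (hR : ∀ n, |r.coeff n| ≤ R.coeff n) (k n : ℕ) :
    |(r ^ k).coeff n| ≤ (R ^ k).coeff n := by
  induction k generalizing n with
  | zero => by_cases hn : n = 0 <;> simp [coeff_one, hn]
  | succ k ih => rw [pow_succ, pow_succ]; exact abs_coeff_mul_le ih hR n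

theorem tsum_ofReal_coeff_mul_pow {P : ℝ[X]} (hP : ∀ n, 0 ≤ P.coeff n) {H : ℝ} (hH : 0 ≤ H) :
    ∑' n, ENNReal.ofReal (P.coeff n) * ENNReal.ofReal H ^ n = ENNReal.ofReal (P.eval H) := by
  rw [tsum_eq_sum (s := Finset.range (P.natDegree + 1)) fun n hn => by
      simp [coeff_eq_zero_of_natDegree_lt (by simpa using hn)],
    eval_eq_sum_range, ENNReal.ofReal_sum_of_nonneg fun n _ => mul_nonneg (hP n) (pow_nonneg hH n)]
  exact Finset.sum_congr rfl fun n _ => by rw [ENNReal.ofReal_mul (hP n), ENNReal.ofReal_pow hH]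

theorem abs_coeff_linQuad_le (a b : ℝ) (n : ℕ) :
    |(C a * X - C b * X ^ 2).coeff n| ≤ (C |a| * X + C |b| * X ^ 2).coeff n := by
  rcases n with _ | _ | _ | n <;> simp [coeff_X, coeff_X_pow]

end Polynomial

theorem ENNReal.ofReal_exp_eq_tsum {x : ℝ} (hx : 0 ≤ x) :
    ENNReal.ofReal (Real.exp x) = ∑' k, ENNReal.ofReal (x ^ k / k.factorial) := by
  rw [Real.exp_eq_exp_ℝ, NormedSpace.exp_eq_tsum_div,
    ENNReal.ofReal_tsum_of_nonneg (fun k => by positivity) (Real.summable_pow_div_factorial x)]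

namespace RandomVorticity

open Polynomial

def expMajorant (q : ℝ[X]) (A : ℝ≥0∞) : ℝ≥0∞ := ∑' n, ‖expCoeff q n‖ₑ * A ^ n

section Majorant

variable {r R : ℝ[X]}

theorem tsum_tsum_enorm_coeff_pow_le (hR : ∀ n, |r.coeff n| ≤ R.coeff n) {H : ℝ} (hH : 0 ≤ H) :
    ∑' k, ∑' n, ‖(r ^ k).coeff n / k.factorial‖ₑ * ENNReal.ofReal H ^ n ≤
      ENNReal.ofReal (Real.exp (R.eval H)) := by
  have hRk : ∀ k n, 0 ≤ (R ^ k).coeff n := fun k n => (abs_nonneg _).trans (abs_coeff_pow_le hR k n)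
  have hRH : 0 ≤ R.eval H := by
    rw [eval_eq_sum_range]
    exact Finset.sum_nonneg fun n _ => mul_nonneg ((abs_nonneg _).trans (hR n)) (pow_nonneg hH n)
  rw [ENNReal.ofReal_exp_eq_tsum hRH]
  refine ENNReal.tsum_le_tsum fun k => ?_
  calc ∑' n, ‖(r ^ k).coeff n / k.factorial‖ₑ * ENNReal.ofReal H ^ n
      ≤ ∑' n, ENNReal.ofReal (k.factorial : ℝ)⁻¹ * (ENNReal.ofReal ((R ^ k).coeff n) *
          ENNReal.ofReal H ^ n) := by
        refine ENNReal.tsum_le_tsum fun n => ?_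
        rw [← mul_assoc, ← ENNReal.ofReal_mul (by positivity), Real.enorm_eq_ofReal_abs, abs_div,
          Nat.abs_cast, div_eq_inv_mul]
        gcongr
        exact abs_coeff_pow_le hR k n
    _ = ENNReal.ofReal ((R.eval H) ^ k / k.factorial) := by
        rw [ENNReal.tsum_mul_left, tsum_ofReal_coeff_mul_pow (hRk k) hH, eval_pow,
          ← ENNReal.ofReal_mul (by positivity), div_eq_inv_mul]

theorem expMajorant_le_exp_eval (hR : ∀ n, |r.coeff n| ≤ R.coeff n) {H : ℝ} (hH : 0 ≤ H) :
    expMajorant r (ENNReal.ofReal H) ≤ ENNReal.ofReal (Real.exp (R.eval H)) := by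
  refine le_trans ?_ (tsum_tsum_enorm_coeff_pow_le hR hH)
  rw [ENNReal.tsum_comm]
  refine ENNReal.tsum_le_tsum fun n => ?_
  rw [ENNReal.tsum_mul_right]
  exact mul_le_mul_left enorm_tsum_le_tsum_enorm _

open Finset in
theorem coeff_pow_C_add_div_factorial (c : ℝ) (r : ℝ[X]) (m n : ℕ) :
    ((C c + r) ^ m).coeff n / m.factorial = ∑ kl ∈ antidiagonal m,
      c ^ kl.1 / kl.1.factorial * ((r ^ kl.2).coeff n / kl.2.factorial) := by
  rw [(Commute.all _ _).add_pow', finsetSum_coeff, Finset.sum_div]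
  refine Finset.sum_congr rfl fun kl hkl => ?_
  obtain ⟨i, j⟩ := kl
  obtain rfl : i + j = m := mem_antidiagonal.1 hkl
  have hchoose : ((i + j).choose i : ℝ) * i.factorial * j.factorial = (i + j).factorial := by
    rw [Nat.choose_symm_add]
    exact_mod_cast Nat.add_choose_mul_factorial_mul_factorial i j
  have hpos : ((i + j).choose i : ℝ) ≠ 0 := by
    exact_mod_cast (Nat.choose_pos (Nat.le_add_right i j)).ne'
  rw [coeff_smul, ← C_pow, coeff_C_mul, nsmul_eq_mul, ← hchoose]
  field_simp

theorem expCoeff_C_add (hR : ∀ n, |r.coeff n| ≤ R.coeff n) (c : ℝ) (n : ℕ) :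
    expCoeff (C c + r) n = Real.exp c * expCoeff r n := by
  have hexp : Summable fun k => ‖c ^ k / k.factorial‖ :=
    summable_abs_iff.2 (Real.summable_pow_div_factorial c)
  have hcoeff : Summable fun k => ‖(r ^ k).coeff n / k.factorial‖ := by
    refine tsum_enorm_ne_top_iff_summable_norm.1 <|
      ne_top_of_le_ne_top (ENNReal.ofReal_ne_top (r := Real.exp (R.eval 1))) ?_
    refine le_trans ?_ (tsum_tsum_enorm_coeff_pow_le hR zero_le_one)
    exact ENNReal.tsum_le_tsum fun k => by
      simpa using ENNReal.le_tsum (f := fun n => ‖(r ^ k).coeff n / k.factorial‖ₑ) n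
  rw [Real.exp_eq_exp_ℝ, NormedSpace.exp_eq_tsum_div, expCoeff, expCoeff,
    tsum_mul_tsum_eq_tsum_sum_antidiagonal_of_summable_norm hexp hcoeff]
  exact tsum_congr fun m => coeff_pow_C_add_div_factorial c r m n

theorem expMajorant_C_add_le (hR : ∀ n, |r.coeff n| ≤ R.coeff n) (c : ℝ) {H : ℝ} (hH : 0 ≤ H) :
    expMajorant (C c + r) (ENNReal.ofReal H) ≤ ENNReal.ofReal (Real.exp (c + R.eval H)) := by
  have hfactor : expMajorant (C c + r) (ENNReal.ofReal H) =
      ENNReal.ofReal (Real.exp c) * expMajorant r (ENNReal.ofReal H) := by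
    rw [expMajorant, expMajorant, ← ENNReal.tsum_mul_left]
    refine tsum_congr fun n => ?_
    rw [expCoeff_C_add hR, enorm_mul, Real.enorm_of_nonneg (Real.exp_pos c).le, mul_assoc]
  rw [hfactor, Real.exp_add, ENNReal.ofReal_mul (Real.exp_pos c).le]
  gcongr
  exact expMajorant_le_exp_eval hR hH

end Majorant

theorem expMajorant_C_add_linQuad_le (c a b : ℝ) {H : ℝ} (hH : 0 ≤ H) :
    expMajorant (C c + (C a * X - C b * X ^ 2)) (ENNReal.ofReal H) ≤
      ENNReal.ofReal (Real.exp (c + (|a| * H + |b| * H ^ 2))) := by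
  simpa using expMajorant_C_add_le (abs_coeff_linQuad_le a b) c hH

theorem aestronglyMeasurable_conv {h : E → ℝ} {u : E → E} (hh : AEStronglyMeasurable h)
    (hu : AEStronglyMeasurable u) : AEStronglyMeasurable (conv h u) :=
  ((hh.comp_quasiMeasurePreserving
      (quasiMeasurePreserving_sub_of_right_invariant volume volume)).smul
    (hu.comp_quasiMeasurePreserving Measure.quasiMeasurePreserving_snd)).integral_prod_right'

theorem enorm_conv_le (h : E → ℝ) (u : E → E) (ξ : E) :
    ‖conv h u ξ‖ₑ ≤ ((fun x => ‖u x‖ₑ) ⋆ₗ fun x => ‖h x‖ₑ) ξ := by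
  refine (enorm_integral_le_lintegral_enorm _).trans_eq (lintegral_congr fun y => ?_)
  rw [enorm_smul, mul_comm, neg_add_eq_sub]

theorem eLpNorm_conv_le {r : ℝ≥0∞} (hr1 : 1 ≤ r) (hr : r ≠ ∞) {h : E → ℝ} {u : E → E}
    (hh : AEStronglyMeasurable h) (hu : AEStronglyMeasurable u) :
    eLpNorm (conv h u) r volume ≤ eLpNorm h 1 volume * eLpNorm u r volume :=
  calc eLpNorm (conv h u) r volume
      ≤ eLpNorm ((fun x => ‖u x‖ₑ) ⋆ₗ fun x => ‖h x‖ₑ) r volume :=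
        eLpNorm_mono_enorm (enorm_conv_le h u)
    _ ≤ eLpNorm (fun x => ‖u x‖ₑ) r volume * ∫⁻ x, ‖h x‖ₑ :=
        eLpNorm_lconvolution_le hr1 hr hu.enorm hh.enorm
    _ = eLpNorm h 1 volume * eLpNorm u r volume := by
        rw [eLpNorm_enorm, eLpNorm_one_eq_lintegral_enorm, mul_comm]

def LpBoundedBy (r : ℝ≥0∞) (T : (E → E) → E → E) (C : ℝ≥0∞) : Prop :=
  ∀ u, MemLp u r volume → MemLp (T u) r volume ∧ eLpNorm (T u) r volume ≤ C * eLpNorm u r volume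

section LpBoundedBy

variable {r : ℝ≥0∞}

theorem LpBoundedBy.comp {T S : (E → E) → E → E} {C D : ℝ≥0∞} (hT : LpBoundedBy r T C)
    (hS : LpBoundedBy r S D) : LpBoundedBy r (fun u => T (S u)) (C * D) := fun u hu =>
  let ⟨hSu, hSle⟩ := hS u hu
  let ⟨hTu, hTle⟩ := hT _ hSu
  ⟨hTu, hTle.trans (by rw [mul_assoc]; gcongr)⟩

theorem LpBoundedBy.opNorm_le {T : (E → E) → E → E} {C : ℝ≥0∞} (hT : LpBoundedBy r T C) :
    opNorm r T ≤ C :=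
  iSup_le fun u => (hT u.1 u.2.1).2.trans (mul_le_of_le_one_right' u.2.2)

theorem lpBoundedBy_foldr {ι : Type*} {T : ι → (E → E) → E → E} {C : ι → ℝ≥0∞}
    (hT : ∀ i, LpBoundedBy r (T i) (C i)) (l : List ι) :
    LpBoundedBy r (fun u => (l.map T).foldr (fun f v => f v) u) (l.map C).prod := by
  induction l with
  | nil => exact fun u hu => ⟨hu, by simp⟩
  | cons i l ih => simpa only [List.map_cons, List.foldr_cons, List.prod_cons] using (hT i).comp ih

theorem lpBoundedBy_conv (hr1 : 1 ≤ r) (hr : r ≠ ∞) {h : E → ℝ} (hh : Integrable h) :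
    LpBoundedBy r (conv h) (eLpNorm h 1 volume) := fun _ hu =>
  have hle := eLpNorm_conv_le hr1 hr hh.1 hu.1
  ⟨⟨aestronglyMeasurable_conv hh.1 hu.1,
    hle.trans_lt (ENNReal.mul_lt_top (memLp_one_iff_integrable.2 hh).2 hu.2)⟩, hle⟩

theorem lpBoundedBy_convIter (hr1 : 1 ≤ r) (hr : r ≠ ∞) {h : E → ℝ} (hh : Integrable h) (n : ℕ) :
    LpBoundedBy r (convIter h n) (eLpNorm h 1 volume ^ n) := by
  induction n with
  | zero => exact fun _ hu => ⟨hu, by simp [convIter]⟩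
  | succ n ih => rw [pow_succ']; exact (lpBoundedBy_conv hr1 hr hh).comp ih

theorem lpBoundedBy_expConvOp (hr1 : 1 ≤ r) (hr : r ≠ ∞) {h : E → ℝ} (hh : Integrable h) {q : ℝ[X]}
    (hq : expMajorant q (eLpNorm h 1 volume) ≠ ∞) :
    LpBoundedBy r (expConvOp h q) (expMajorant q (eLpNorm h 1 volume)) := by
  intro u hu
  have hterm : ∀ n, MemLp (expCoeff q n • convIter h n u) r volume ∧
      eLpNorm (expCoeff q n • convIter h n u) r volume ≤
        ‖expCoeff q n‖ₑ * eLpNorm h 1 volume ^ n * eLpNorm u r volume := fun n =>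
    have ⟨hmem, hle⟩ := lpBoundedBy_convIter hr1 hr hh n u hu
    ⟨hmem.const_smul _, by rw [eLpNorm_const_smul, mul_assoc]; gcongr⟩
  have hsum : ∑' n, eLpNorm (expCoeff q n • convIter h n u) r volume ≤
      expMajorant q (eLpNorm h 1 volume) * eLpNorm u r volume :=
    (ENNReal.tsum_le_tsum fun n => (hterm n).2).trans_eq ENNReal.tsum_mul_right
  obtain ⟨hmem, hle⟩ := memLp_tsum_and_eLpNorm_tsum_le hr1 (fun n => (hterm n).1)
    (ne_top_of_le_ne_top (ENNReal.mul_ne_top hq hu.eLpNorm_ne_top) hsum)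
  exact ⟨hmem, hle.trans hsum⟩

theorem opNorm_foldr_expConvOp_le (hr1 : 1 ≤ r) (hr : r ≠ ∞) {N : ℕ} {h : Fin N → E → ℝ}
    (hh : ∀ i, Integrable (h i)) (P : Fin N → ℝ[X]) {M : Fin N → ℝ}
    (hP : ∀ i, expMajorant (P i) (eLpNorm (h i) 1 volume) ≤ ENNReal.ofReal (M i)) :
    opNorm r (fun u => ((List.finRange N).map fun i => expConvOp (h i) (P i)).foldr
      (fun f v => f v) u) ≤ ∏ i, ENNReal.ofReal (M i) := by
  have hT i := lpBoundedBy_expConvOp hr1 hr (hh i) (ne_top_of_le_ne_top ofReal_ne_top (hP i))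
  refine (lpBoundedBy_foldr hT _).opNorm_le.trans ?_
  rw [← Fin.prod_univ_def]
  exact Finset.prod_le_prod' fun i _ => hP i

end LpBoundedBy

theorem eLpNorm_one_eq_ofReal_l1norm {h : E → ℝ} (hh : Integrable h) :
    eLpNorm h 1 volume = ENNReal.ofReal (l1norm h) := by
  rw [eLpNorm_one_eq_lintegral_enorm, ← ofReal_integral_norm_eq_lintegral_enorm hh]
  rfl

theorem l1norm_nonneg (h : E → ℝ) : 0 ≤ l1norm h := integral_nonneg fun _ => abs_nonneg _

def gammaConst (β τ l : ℝ) : ℝ := β * l - τ * l ^ 2 / 2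

/-- The value at `H` of the majorant of the non-constant part of `± gammaPoly β τ l`. -/
def gammaSpread (β τ l H : ℝ) : ℝ := |β - τ * l| * H + |τ / 2| * H ^ 2

theorem expMajorant_gammaPoly_le (β τ l : ℝ) {H : ℝ} (hH : 0 ≤ H) :
    expMajorant (gammaPoly β τ l) (ENNReal.ofReal H) ≤
      ENNReal.ofReal (Real.exp (gammaConst β τ l + gammaSpread β τ l H)) := by
  rw [gammaPoly, add_sub_assoc]
  exact expMajorant_C_add_linQuad_le _ _ _ hH

theorem expMajorant_neg_gammaPoly_le (β τ l : ℝ) {H : ℝ} (hH : 0 ≤ H) :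
    expMajorant (-gammaPoly β τ l) (ENNReal.ofReal H) ≤
      ENNReal.ofReal (Real.exp (-gammaConst β τ l + gammaSpread β τ l H)) := by
  have hneg : -gammaPoly β τ l =
      C (-gammaConst β τ l) + (C (-(β - τ * l)) * X - C (-(τ / 2)) * X ^ 2) := by
    simp only [gammaPoly, gammaConst, map_neg]
    ring
  rw [hneg, gammaSpread, ← abs_neg (β - τ * l), ← abs_neg (τ / 2)]
  exact expMajorant_C_add_linQuad_le _ _ _ hH

section Gamma

variable {r : ℝ≥0∞} {N : ℕ} {h : Fin N → E → ℝ}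

theorem opNorm_GammaOp_le (hr1 : 1 ≤ r) (hr : r ≠ ∞) (hh : ∀ i, Integrable (h i))
    (lam : Fin N → ℝ) (b : Fin N → ℝ → ℝ) (t : ℝ) :
    opNorm r (GammaOp h lam b t) ≤ ∏ i, ENNReal.ofReal (Real.exp
      (gammaConst (b i t) t (lam i) + gammaSpread (b i t) t (lam i) (l1norm (h i)))) :=
  opNorm_foldr_expConvOp_le hr1 hr hh _ fun i => by
    rw [eLpNorm_one_eq_ofReal_l1norm (hh i)]
    exact expMajorant_gammaPoly_le _ _ _ (l1norm_nonneg _)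

theorem opNorm_GammaInvOp_le (hr1 : 1 ≤ r) (hr : r ≠ ∞) (hh : ∀ i, Integrable (h i))
    (lam : Fin N → ℝ) (b : Fin N → ℝ → ℝ) (t : ℝ) :
    opNorm r (GammaInvOp h lam b t) ≤ ∏ i, ENNReal.ofReal (Real.exp
      (-gammaConst (b i t) t (lam i) + gammaSpread (b i t) t (lam i) (l1norm (h i)))) :=
  opNorm_foldr_expConvOp_le hr1 hr hh _ fun i => by
    rw [eLpNorm_one_eq_ofReal_l1norm (hh i)]
    exact expMajorant_neg_gammaPoly_le _ _ _ (l1norm_nonneg _)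

theorem eta_le_prod {p q : ℝ} (hp : 1 ≤ p) (hp' : 1 ≤ 3 * p / (3 - p)) (hq : 1 ≤ q)
    (hh : ∀ i, Integrable (h i)) (lam : Fin N → ℝ) (b : Fin N → ℝ → ℝ) (t : ℝ) :
    eta h lam b p q t ≤ ∏ i, ENNReal.ofReal (Real.exp
      (gammaConst (b i t) t (lam i) + 3 * gammaSpread (b i t) t (lam i) (l1norm (h i)))) := by
  have hΓ {s : ℝ} (hs : 1 ≤ s) := opNorm_GammaOp_le (r := ENNReal.ofReal s) (by simpa using hs)
    ofReal_ne_top hh lam b t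
  have hΓinv := opNorm_GammaInvOp_le (r := ENNReal.ofReal q) (by simpa using hq)
    ofReal_ne_top hh lam b t
  refine (mul_le_mul' (mul_le_mul' (hΓ hp) (hΓ hp')) hΓinv).trans_eq ?_
  simp only [← Finset.prod_mul_distrib, ← ENNReal.ofReal_mul (Real.exp_pos _).le,
    ← Real.exp_add]
  congr! 3
  ring

end Gamma

theorem gammaConst_add_three_mul_gammaSpread_le {β τ l H : ℝ} (hτ : 0 ≤ τ) (hH : 0 ≤ H) :
    gammaConst β τ l + 3 * gammaSpread β τ l H ≤
      3 * |β| * (H + |l|) - τ * (l ^ 2 / 2 - 3 / 2 * (H ^ 2 + 2 * |l| * H)) := by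
  have hspread : |β - τ * l| * H ≤ (|β| + τ * |l|) * H := by
    gcongr
    simpa [abs_mul, abs_of_nonneg hτ] using abs_sub β (τ * l)
  have hprod : β * l ≤ |β| * |l| := by simpa [abs_mul] using le_abs_self (β * l)
  rw [gammaConst, gammaSpread, abs_of_nonneg (by positivity : 0 ≤ τ / 2)]
  nlinarith [mul_nonneg (abs_nonneg β) (abs_nonneg l)]

theorem decayRate_pos {l H : ℝ} (hH : 0 ≤ H) (hl : (√12 + 3) * H < |l|) :
    0 < l ^ 2 / 2 - 3 / 2 * (H ^ 2 + 2 * |l| * H) := by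
  have hsq : (√12 * H) ^ 2 < (|l| - 3 * H) ^ 2 :=
    pow_lt_pow_left₀ (by linarith) (by positivity) two_ne_zero
  rw [mul_pow, Real.sq_sqrt (by norm_num)] at hsq
  nlinarith [sq_abs l]

/-- Remark 1.2: `η(t) ≤ ∏ᵢ exp(3|bᵢ(t)|(|hᵢ|₁+|λᵢ|) − t αᵢ)` where
`αᵢ = λᵢ²/2 − (3/2)(|hᵢ|₁² + 2|λᵢ||hᵢ|₁)`; and `αᵢ > 0` provided
`|λᵢ| > (√12 + 3)|hᵢ|₁`. -/
theorem statement9 (p q : ℝ) (hp1 : 3 / 2 < p) (hp2 : p < 2) (hq : 1 / q = 2 / p - 1 / 3)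
    (N : ℕ) (h : Fin N → E → ℝ) (lam : Fin N → ℝ) (b : Fin N → ℝ → ℝ)
    (hKD : KernelData h b) :
    (∀ t : ℝ, 0 ≤ t →
      eta h lam b p q t ≤
        ENNReal.ofReal (∏ i, Real.exp (3 * |b i t| * (l1norm (h i) + |lam i|) -
          t * (lam i ^ 2 / 2 -
            3 / 2 * (l1norm (h i) ^ 2 + 2 * |lam i| * l1norm (h i)))))) ∧
    ((∀ i, (Real.sqrt 12 + 3) * l1norm (h i) < |lam i|) →
      ∀ i, 0 < lam i ^ 2 / 2 -
        3 / 2 * (l1norm (h i) ^ 2 + 2 * |lam i| * l1norm (h i))) := by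
  obtain ⟨hh, -, -⟩ := hKD
  refine ⟨fun t ht => ?_, fun hlam i => decayRate_pos (l1norm_nonneg (h i)) (hlam i)⟩
  have hp3 : 1 ≤ 3 * p / (3 - p) := by rw [le_div_iff₀ (by linarith)]; linarith
  have hq1 : 1 ≤ q := by
    have h2p : 1 < 2 / p := by rw [lt_div_iff₀ (by linarith)]; linarith
    have h2p' : 2 / p < 4 / 3 := by rw [div_lt_iff₀ (by linarith)]; linarith
    have hq0 : 0 < q := one_div_pos.1 (by linarith)
    have : 1 / q ≤ 1 := by linarith
    rwa [div_le_iff₀ hq0, one_mul] at this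
  refine (eta_le_prod (by linarith) hp3 hq1 hh lam b t).trans ?_
  rw [ENNReal.ofReal_prod_of_nonneg fun i _ => (Real.exp_pos _).le]
  exact Finset.prod_le_prod' fun i _ => ENNReal.ofReal_le_ofReal <| Real.exp_le_exp.2 <|
    gammaConst_add_three_mul_gammaSpread_le ht (l1norm_nonneg _)

end RandomVorticity
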